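/- For a differential k-chain J in the completion B̂_k^r and r ≥ 0, the norm ‖J‖_{B^r} is attained by testing against forms one degree smoother: ‖J‖_{B^r} = sup{|ω(J)|/‖ω‖_{B^r} : 0 ≠ ω of class B^{r+1}}. -/

import Mathlib

/-!
Testing `J` against a class-`B^{r+1}` form `ω` gives `|ω J| ≤ ‖ω‖_{B^r} ‖J‖`: this holds on Dirac
chains by the definition of the two norms and passes to the completion by density, so the
supremum is at most `‖J‖`. Conversely, Hahn–Banach gives a functional `g₀` with `‖g₀‖ ≤ 1` and
`g₀ J = ‖J‖`; on Dirac chains it is a `B^r` form of norm at most one. Approximate `J` by a Dirac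
chain `A` and replace `g₀` by a smoother form `η`, still of `B^r` norm at most one, with
`η A ≈ g₀ A`; extending `η` to the completion (Hahn–Banach again) gives a competitor whose
quotient is at least `η J ≈ ‖J‖`.

For `r ≥ 1` the smoother form is the mollification of `g₀`: averaging over short segments
`[0, c] • e` preserves every `B^r` bound, since translations commute with difference chains, and
makes differences in direction `e` of size `O(|s| / c)`; averaging along all coordinate directions
gives a `B^{r+1}` bound. For `r = 0` a form need not be continuous along lines, so instead `g₀` is
interpolated between the points of `A` by tent functions with disjoint supports.
-/

noncomputable section

open Finsupp Filter

variable {E W : Type*} [NormedAddCommGroup E] [NormedSpace ℝ E]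
  [NormedAddCommGroup W] [NormedSpace ℝ W]

/-- Translation of a Dirac chain through the vector `u`. -/
def transl (u : E) (A : E →₀ W) : E →₀ W := Finsupp.mapDomain (· + u) A

/-- The difference operator `Δ_u = T_u - I`. -/
def del (u : E) (A : E →₀ W) : E →₀ W := transl u A - A

/-- Iterated difference chain along a list of vectors. -/
def diff : List E → (E →₀ W) → (E →₀ W)
  | [], A => A
  | u :: σ, A => del u (diff σ A)

/-- The product of the norms of the vectors in the list `σ`. -/
def lnorm (σ : List E) : ℝ := (σ.map norm).prod

/-- Costs of representations of `A` as sums of `j`-difference chains with `j ≤ r`. -/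
def reps (r : ℕ) (A : E →₀ W) : Set ℝ :=
  {c | ∃ (m : ℕ) (σ : Fin m → List E) (p : Fin m → E) (α : Fin m → W),
      (∀ i, (σ i).length ≤ r) ∧
      A = ∑ i, diff (σ i) (Finsupp.single (p i) (α i)) ∧
      c = ∑ i, lnorm (σ i) * ‖α i‖}

/-- The `B^r` norm of a Dirac chain. -/
def Bnorm (r : ℕ) (A : E →₀ W) : ℝ := sInf (reps r A)

/-- `M` is a `B^r`-bound for the cochain (differential form) `ω`. -/
def IsFormBound (r : ℕ) (ω : (E →₀ W) →ₗ[ℝ] ℝ) (M : ℝ) : Prop :=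
  ∀ (σ : List E) (p : E) (α : W), σ.length ≤ r →
    |ω (diff σ (Finsupp.single p α))| ≤ M * lnorm σ * ‖α‖

/-- The `B^r` norm of a differential form. -/
def formNorm (r : ℕ) (ω : (E →₀ W) →ₗ[ℝ] ℝ) : ℝ :=
  sInf {M | 0 ≤ M ∧ IsFormBound r ω M}

open Topology Set

lemma transl_single (u p : E) (α : W) : transl u (single p α) = single (p + u) α := by
  simp [transl]

lemma transl_add (u : E) (A B : E →₀ W) : transl u (A + B) = transl u A + transl u B :=
  mapDomain_add

lemma transl_sub (u : E) (A B : E →₀ W) : transl u (A - B) = transl u A - transl u B :=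
  (mapDomain.addMonoidHom (· + u)).map_sub A B

lemma transl_smul (u : E) (s : ℝ) (A : E →₀ W) : transl u (s • A) = s • transl u A :=
  mapDomain_smul _ _

lemma transl_transl (u v : E) (A : E →₀ W) : transl u (transl v A) = transl (v + u) A := by
  simp only [transl, ← mapDomain_comp]
  congr 1
  funext x
  simp [add_assoc]

lemma transl_zero (A : E →₀ W) : transl (0 : E) A = A := by
  simp only [transl, add_zero]
  exact mapDomain_id

lemma transl_eq_sum (u : E) (A : E →₀ W) :
    transl u A = ∑ p ∈ A.support, single (p + u) (A p) :=
  rfl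

lemma del_zero (A : E →₀ W) : del (0 : E) A = 0 := by
  rw [del, transl_zero, sub_self]

lemma del_transl (u v : E) (A : E →₀ W) : del v (transl u A) = transl u (del v A) := by
  simp [del, transl_sub, transl_transl, add_comm]

lemma del_add (u v : E) (A : E →₀ W) : del (u + v) A = del u (transl v A) + del v A := by
  simp [del, transl_transl, add_comm u v]

lemma diff_transl (σ : List E) (u : E) (A : E →₀ W) :
    diff σ (transl u A) = transl u (diff σ A) := by
  induction σ with
  | nil => rfl
  | cons v σ ih => simp [diff, ih, del_transl]

lemma transl_diff_single (σ : List E) (u p : E) (α : W) :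
    transl u (diff σ (single p α)) = diff σ (single (p + u) α) := by
  rw [← diff_transl, transl_single]

lemma apply_eq_sum_single {F M : Type*} [AddCommMonoid M] [FunLike F (E →₀ W) M]
    [AddMonoidHomClass F (E →₀ W) M] (φ : F) (A : E →₀ W) :
    φ A = ∑ p ∈ A.support, φ (single p (A p)) := by
  conv_lhs => rw [← A.sum_single]
  exact map_sum φ _ _

lemma lnorm_nonneg (σ : List E) : 0 ≤ lnorm σ :=
  List.prod_nonneg fun x hx => by
    obtain ⟨y, -, rfl⟩ := List.mem_map.mp hx
    exact norm_nonneg y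

lemma lnorm_nil : lnorm ([] : List E) = 1 := rfl

lemma lnorm_cons (u : E) (σ : List E) : lnorm (u :: σ) = ‖u‖ * lnorm σ := by
  simp [lnorm]

lemma mem_reps_of_finset {ι : Type*} {r : ℕ} {A : E →₀ W} (s : Finset ι) (σ : ι → List E)
    (p : ι → E) (α : ι → W) (hσ : ∀ i ∈ s, (σ i).length ≤ r)
    (hA : A = ∑ i ∈ s, diff (σ i) (single (p i) (α i))) :
    ∑ i ∈ s, lnorm (σ i) * ‖α i‖ ∈ reps r A := by
  let e := s.equivFin.symm
  refine ⟨s.card, fun k => σ (e k), fun k => p (e k), fun k => α (e k),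
    fun k => hσ _ (e k).2, ?_, ?_⟩
  · rw [hA, ← s.sum_coe_sort]
    exact (e.sum_comp fun i : s => diff (σ i) (single (p i) (α i))).symm
  · rw [← s.sum_coe_sort]
    exact (e.sum_comp fun i : s => lnorm (σ i) * ‖α i‖).symm

lemma reps_nonempty (r : ℕ) (A : E →₀ W) : (reps r A).Nonempty :=
  ⟨_, mem_reps_of_finset A.support (fun _ => []) id A (fun _ _ => Nat.zero_le r)
    (A.sum_single.symm)⟩

lemma nonneg_of_mem_reps {r : ℕ} {A : E →₀ W} {c : ℝ} (hc : c ∈ reps r A) : 0 ≤ c := by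
  obtain ⟨m, σ, p, α, -, -, rfl⟩ := hc
  exact Finset.sum_nonneg fun i _ => mul_nonneg (lnorm_nonneg _) (norm_nonneg _)

lemma Bnorm_diff_single_le {r : ℕ} {σ : List E} (hσ : σ.length ≤ r) (p : E) (α : W) :
    Bnorm r (diff σ (single p α)) ≤ lnorm σ * ‖α‖ :=
  csInf_le ⟨0, fun _ => nonneg_of_mem_reps⟩
    ⟨1, fun _ => σ, fun _ => p, fun _ => α, fun _ => hσ, by simp, by simp⟩

/-- `ω` is of class `B^r`: it has a finite `B^r` norm. -/
def IsClassB (r : ℕ) (ω : (E →₀ W) →ₗ[ℝ] ℝ) : Prop :=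
  ∃ M, 0 ≤ M ∧ IsFormBound r ω M

lemma formNorm_nonneg (r : ℕ) (ω : (E →₀ W) →ₗ[ℝ] ℝ) : 0 ≤ formNorm r ω :=
  Real.sInf_nonneg fun _ h => h.1

section Forms

variable {ω : (E →₀ W) →ₗ[ℝ] ℝ} {M : ℝ}

lemma abs_le_mul_of_mem_reps (hω : IsFormBound r ω M) {A : E →₀ W} {c : ℝ} (hc : c ∈ reps r A) :
    |ω A| ≤ M * c := by
  obtain ⟨m, σ, p, α, hσ, rfl, rfl⟩ := hc
  rw [map_sum, Finset.mul_sum]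
  refine (Finset.abs_sum_le_sum_abs _ _).trans (Finset.sum_le_sum fun i _ => ?_)
  rw [← mul_assoc]
  exact hω _ _ _ (hσ i)

lemma abs_le_mul_Bnorm (hM : 0 ≤ M) (hω : IsFormBound r ω M) (A : E →₀ W) :
    |ω A| ≤ M * Bnorm r A := by
  rw [Bnorm, ← smul_eq_mul, ← Real.sInf_smul_of_nonneg hM]
  refine le_csInf ((reps_nonempty r A).smul_set) ?_
  rintro _ ⟨c, hc, rfl⟩
  exact abs_le_mul_of_mem_reps hω hc

lemma IsFormBound.mono {s : ℕ} (hω : IsFormBound s ω M) (hrs : r ≤ s) : IsFormBound r ω M :=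
  fun σ p α hσ => hω σ p α (hσ.trans hrs)

lemma isFormBound_zero_iff :
    IsFormBound 0 ω M ↔ ∀ (p : E) (α : W), |ω (single p α)| ≤ M * ‖α‖ := by
  refine ⟨fun h p α => by simpa [diff, lnorm_nil] using h [] p α le_rfl, fun h σ p α hσ => ?_⟩
  rw [List.length_eq_zero_iff.mp (Nat.le_zero.mp hσ)]
  simpa [diff, lnorm_nil] using h p α

lemma isFormBound_succ {K : ℝ} (h₀ : IsFormBound 0 ω M)
    (hdel : ∀ (u : E) (σ : List E) (p : E) (α : W), σ.length ≤ r →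
      |ω (del u (diff σ (single p α)))| ≤ K * ‖u‖ * lnorm σ * ‖α‖) :
    IsFormBound (r + 1) ω (max M K) := by
  rintro (_ | ⟨u, σ⟩) p α hσ
  · exact (h₀ [] p α le_rfl).trans (by gcongr; exacts [lnorm_nonneg _, le_max_left _ _])
  · rw [lnorm_cons, ← mul_assoc]
    exact (hdel u σ p α (Nat.le_of_succ_le_succ hσ)).trans (by
      gcongr
      exacts [lnorm_nonneg _, le_max_right _ _])

lemma IsClassB.mono {s : ℕ} (hω : IsClassB s ω) (hrs : r ≤ s) : IsClassB r ω :=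
  let ⟨M, hM, hωM⟩ := hω
  ⟨M, hM, hωM.mono hrs⟩

lemma formNorm_le (hM : 0 ≤ M) (hω : IsFormBound r ω M) : formNorm r ω ≤ M :=
  csInf_le ⟨0, fun _ h => h.1⟩ ⟨hM, hω⟩

lemma isFormBound_formNorm (hω : IsClassB r ω) : IsFormBound r ω (formNorm r ω) := by
  intro σ p α hσ
  have hc : 0 ≤ lnorm σ * ‖α‖ := mul_nonneg (lnorm_nonneg σ) (norm_nonneg α)
  rw [mul_assoc, mul_comm, ← smul_eq_mul, formNorm, ← Real.sInf_smul_of_nonneg hc]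
  obtain ⟨M, hM⟩ := hω
  refine le_csInf ⟨_, M, hM, rfl⟩ ?_
  rintro _ ⟨M, ⟨-, hM⟩, rfl⟩
  simpa only [smul_eq_mul, mul_comm (lnorm σ * ‖α‖), ← mul_assoc] using hM σ p α hσ

end Forms

section Tent

variable {P : Type*} [MetricSpace P] {δ : ℝ}

lemma exists_pos_pairwise_two_mul_le_dist (F : Finset P) :
    ∃ δ > 0, (F : Set P).Pairwise fun q q' => 2 * δ ≤ dist q q' := by
  have hpair : ∀ q ∈ F, ∀ q' ∈ F, ∀ᶠ δ in 𝓝[>] (0 : ℝ), q ≠ q' → 2 * δ ≤ dist q q' := by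
    intro q _ q' _
    by_cases hqq' : q = q'
    · exact .of_forall fun _ h => absurd hqq' h
    have hlim : Tendsto (fun δ : ℝ => 2 * δ) (𝓝[>] 0) (𝓝 0) :=
      tendsto_nhdsWithin_of_tendsto_nhds (by simpa using (continuous_const_mul (2 : ℝ)).tendsto 0)
    exact (hlim.eventually (ge_mem_nhds (dist_pos.mpr hqq'))).mono fun _ h _ => h
  obtain ⟨δ, hδ, hsep⟩ := ((eventually_mem_nhdsWithin (s := Ioi (0 : ℝ)) (a := 0)).and
    ((eventually_all_finset F).mpr fun q hq => (eventually_all_finset F).mpr (hpair q hq))).exists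
  exact ⟨δ, hδ, fun q hq q' hq' => hsep q hq q' hq'⟩

def tent (δ : ℝ) (q p : P) : ℝ := max (1 - dist p q / δ) 0

lemma tent_nonneg (δ : ℝ) (q p : P) : 0 ≤ tent δ q p := le_max_right _ _

lemma tent_le_one (hδ : 0 ≤ δ) (q p : P) : tent δ q p ≤ 1 :=
  max_le (sub_le_self _ (div_nonneg dist_nonneg hδ)) zero_le_one

lemma tent_self (δ : ℝ) (q : P) : tent δ q q = 1 := by
  simp [tent]

lemma tent_eq_zero (hδ : 0 < δ) {q p : P} (h : δ ≤ dist p q) : tent δ q p = 0 :=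
  max_eq_right (sub_nonpos.mpr ((one_le_div hδ).mpr h))

lemma abs_tent_sub_tent_le (q x y : P) : |tent δ q x - tent δ q y| ≤ |dist x y / δ| := by
  refine (abs_max_sub_max_le_abs _ _ _).trans ?_
  rw [sub_sub_sub_cancel_left, ← sub_div, abs_div, abs_div, abs_of_nonneg dist_nonneg,
    dist_comm x y]
  exact div_le_div_of_nonneg_right (abs_dist_sub_le y x q) (abs_nonneg δ)

variable {F : Finset P}

lemma card_filter_tent_ne_zero_le_one (hδ : 0 < δ)
    (hsep : (F : Set P).Pairwise fun q q' => 2 * δ ≤ dist q q') (p : P) :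
    (F.filter fun q => tent δ q p ≠ 0).card ≤ 1 := by
  refine Finset.card_le_one.mpr fun q hq q' hq' => by_contra fun hne => ?_
  simp only [Finset.mem_filter] at hq hq'
  have hpq : dist p q < δ := not_le.mp fun h => hq.2 (tent_eq_zero hδ h)
  have hpq' : dist p q' < δ := not_le.mp fun h => hq'.2 (tent_eq_zero hδ h)
  have := hsep hq.1 hq'.1 hne
  linarith [dist_triangle_left q q' p]

lemma sum_tent_le_one (hδ : 0 < δ) (hsep : (F : Set P).Pairwise fun q q' => 2 * δ ≤ dist q q')
    (p : P) : ∑ q ∈ F, tent δ q p ≤ 1 := by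
  classical
  rw [← Finset.sum_filter_ne_zero]
  refine (Finset.sum_le_card_nsmul _ _ 1 fun q _ => tent_le_one hδ.le q p).trans ?_
  simpa using card_filter_tent_ne_zero_le_one hδ hsep p

lemma sum_abs_tent_sub_tent_le (hδ : 0 < δ)
    (hsep : (F : Set P).Pairwise fun q q' => 2 * δ ≤ dist q q') (x y : P) :
    ∑ q ∈ F, |tent δ q x - tent δ q y| ≤ 2 * (dist x y / δ) := by
  classical
  have hx := card_filter_tent_ne_zero_le_one hδ hsep x
  have hy := card_filter_tent_ne_zero_le_one hδ hsep y
  rw [← Finset.sum_filter_of_ne (p := fun q => tent δ q x ≠ 0 ∨ tent δ q y ≠ 0) fun q _ h =>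
    not_and_or.mp fun h' => h (by rw [h'.1, h'.2, sub_zero, abs_zero])]
  refine (Finset.sum_le_card_nsmul _ _ _ fun q _ =>
    (abs_tent_sub_tent_le q x y).trans_eq (abs_of_nonneg (by positivity))).trans ?_
  rw [nsmul_eq_mul, Finset.filter_or]
  gcongr
  exact_mod_cast (Finset.card_union_le _ _).trans (Nat.add_le_add hx hy)

lemma abs_sum_tent_mul_le (hδ : 0 < δ) (hsep : (F : Set P).Pairwise fun q q' => 2 * δ ≤ dist q q')
    {a : P → ℝ} {B : ℝ} (hB : 0 ≤ B) (ha : ∀ q, |a q| ≤ B) (p : P) :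
    |∑ q ∈ F, tent δ q p * a q| ≤ B := by
  refine (Finset.abs_sum_le_sum_abs _ _).trans ?_
  calc ∑ q ∈ F, |tent δ q p * a q| ≤ ∑ q ∈ F, tent δ q p * B := by
        gcongr with q
        rw [abs_mul, abs_of_nonneg (tent_nonneg δ q p)]
        exact mul_le_mul_of_nonneg_left (ha q) (tent_nonneg δ q p)
    _ ≤ 1 * B := by
        rw [← Finset.sum_mul]
        exact mul_le_mul_of_nonneg_right (sum_tent_le_one hδ hsep p) hB
    _ = B := one_mul B

lemma abs_sum_tent_sub_tent_mul_le (hδ : 0 < δ)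
    (hsep : (F : Set P).Pairwise fun q q' => 2 * δ ≤ dist q q')
    {a : P → ℝ} {B : ℝ} (hB : 0 ≤ B) (ha : ∀ q, |a q| ≤ B) (x y : P) :
    |∑ q ∈ F, (tent δ q x - tent δ q y) * a q| ≤ 2 * (dist x y / δ) * B := by
  refine (Finset.abs_sum_le_sum_abs _ _).trans ?_
  calc ∑ q ∈ F, |(tent δ q x - tent δ q y) * a q|
      ≤ ∑ q ∈ F, |tent δ q x - tent δ q y| * B := by
        gcongr with q
        rw [abs_mul]
        exact mul_le_mul_of_nonneg_left (ha q) (abs_nonneg _)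
    _ ≤ 2 * (dist x y / δ) * B := by
        rw [← Finset.sum_mul]
        exact mul_le_mul_of_nonneg_right (sum_abs_tent_sub_tent_le hδ hsep x y) hB

end Tent

section Spike

def spike (ω : (E →₀ W) →ₗ[ℝ] ℝ) (δ : ℝ) (F : Finset E) : (E →₀ W) →ₗ[ℝ] ℝ :=
  lsum ℝ fun p => ∑ q ∈ F, tent δ q p • ω ∘ₗ lsingle q

variable {ω : (E →₀ W) →ₗ[ℝ] ℝ} {M δ : ℝ} {F : Finset E}

lemma spike_single (p : E) (α : W) :
    spike ω δ F (single p α) = ∑ q ∈ F, tent δ q p * ω (single q α) := by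
  simp [spike]

lemma spike_support_self (hδ : 0 < δ) {A : E →₀ W}
    (hsep : (A.support : Set E).Pairwise fun q q' => 2 * δ ≤ dist q q') :
    spike ω δ A.support A = ω A := by
  rw [apply_eq_sum_single (spike ω δ A.support), apply_eq_sum_single ω]
  simp only [spike_single]
  refine Finset.sum_congr rfl fun p hp => ?_
  rw [Finset.sum_eq_single_of_mem p hp fun q hq hqp => ?_, tent_self, one_mul]
  rw [tent_eq_zero hδ, zero_mul]
  linarith [hsep hq hp hqp, dist_comm p q]

lemma isFormBound_zero_spike (hδ : 0 < δ)
    (hsep : (F : Set E).Pairwise fun q q' => 2 * δ ≤ dist q q') (hM : 0 ≤ M)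
    (hω : IsFormBound 0 ω M) : IsFormBound 0 (spike ω δ F) M :=
  isFormBound_zero_iff.mpr fun p α => by
    rw [spike_single]
    exact abs_sum_tent_mul_le hδ hsep (by positivity) (fun q => isFormBound_zero_iff.mp hω q α) p

lemma abs_spike_del_single_le (hδ : 0 < δ)
    (hsep : (F : Set E).Pairwise fun q q' => 2 * δ ≤ dist q q') (hM : 0 ≤ M)
    (hω : IsFormBound 0 ω M) (u p : E) (α : W) :
    |spike ω δ F (del u (single p α))| ≤ 2 * M / δ * ‖u‖ * ‖α‖ := by
  rw [del, transl_single, map_sub, spike_single, spike_single, ← Finset.sum_sub_distrib]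
  simp_rw [← sub_mul]
  refine (abs_sum_tent_sub_tent_mul_le hδ hsep (by positivity)
    (fun q => isFormBound_zero_iff.mp hω q α) (p + u) p).trans_eq ?_
  rw [dist_eq_norm, add_sub_cancel_left]
  ring

lemma exists_spike_form (hM : 0 ≤ M) (hω : IsFormBound 0 ω M) (A : E →₀ W) :
    ∃ η, IsFormBound 0 η M ∧ IsClassB 1 η ∧ η A = ω A := by
  obtain ⟨δ, hδ, hsep⟩ := exists_pos_pairwise_two_mul_le_dist A.support
  have h₀ := isFormBound_zero_spike (ω := ω) hδ hsep hM hω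
  refine ⟨spike ω δ A.support, h₀,
    ⟨_, le_max_of_le_left hM, isFormBound_succ (K := 2 * M / δ) h₀ ?_⟩, spike_support_self hδ hsep⟩
  rintro u σ p α hσ
  rw [List.length_eq_zero_iff.mp (Nat.le_zero.mp hσ), diff, lnorm_nil, mul_one]
  exact abs_spike_del_single_le hδ hsep hM hω u p α

end Spike

section IntervalAverage

open intervalIntegral

lemma abs_integral_comp_add_right_sub_le {f : ℝ → ℝ} (hf : Continuous f) {B : ℝ}
    (hB : ∀ t, |f t| ≤ B) (a b s : ℝ) :
    |(∫ t in a..b, f (t + s)) - ∫ t in a..b, f t| ≤ 2 * |s| * B := by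
  rw [integral_comp_add_right, integral_interval_sub_interval_comm
    (hf.intervalIntegrable _ _) (hf.intervalIntegrable _ _) (hf.intervalIntegrable _ _)]
  have hI : ∀ x y, |∫ t in x..y, f t| ≤ B * |y - x| := fun x y => by
    simpa only [Real.norm_eq_abs] using norm_integral_le_of_norm_le_const (f := f) fun t _ => hB t
  calc _ ≤ B * |a - (a + s)| + B * |b - (b + s)| :=
        (abs_sub _ _).trans (add_le_add (hI _ _) (hI _ _))
    _ = 2 * |s| * B := by
        rw [sub_add_cancel_left, sub_add_cancel_left, abs_neg]
        ring

lemma abs_inv_mul_integral_sub_le {f : ℝ → ℝ} (hf : Continuous f) {c L : ℝ} (hc : 0 < c)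
    (hL : ∀ t ∈ Ioc 0 c, |f t - f 0| ≤ L) : |c⁻¹ * (∫ t in 0..c, f t) - f 0| ≤ L := by
  have hsub : c⁻¹ * (∫ t in 0..c, f t) - f 0 = c⁻¹ * ∫ t in 0..c, (f t - f 0) := by
    rw [integral_sub (hf.intervalIntegrable _ _) intervalIntegrable_const, integral_const,
      smul_eq_mul, sub_zero, mul_sub, inv_mul_cancel_left₀ hc.ne']
  have hI := norm_integral_le_of_norm_le_const (a := 0) (b := c) (f := fun t => f t - f 0)
    fun t ht => hL t (uIoc_of_le hc.le ▸ ht)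
  rw [Real.norm_eq_abs, sub_zero, abs_of_pos hc] at hI
  rw [hsub, abs_mul, abs_inv, abs_of_pos hc, inv_mul_le_iff₀ hc, mul_comm]
  exact hI

end IntervalAverage

section Average

variable {ω : (E →₀ W) →ₗ[ℝ] ℝ} {r : ℕ} {M : ℝ}

lemma abs_apply_single_sub_le (hω : IsFormBound 1 ω M) (x y : E) (α : W) :
    |ω (single x α) - ω (single y α)| ≤ M * ‖α‖ * dist x y := by
  have hxy : single x α - single y α = del (x - y) (single y α) := by
    rw [del, transl_single, add_sub_cancel]
  rw [← map_sub, hxy, dist_eq_norm]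
  refine (hω [x - y] y α le_rfl).trans_eq ?_
  rw [lnorm_cons, lnorm_nil]
  ring

lemma continuous_apply_transl_smul (hω : IsFormBound 1 ω M) (e : E) (A : E →₀ W) :
    Continuous fun t : ℝ => ω (transl (t • e) A) := by
  have hlip : ∀ α : W, LipschitzWith (M * ‖α‖).toNNReal fun x : E => ω (single x α) :=
    fun α => .of_dist_le_mul fun x y =>
      (abs_apply_single_sub_le hω x y α).trans (by gcongr; exact Real.le_coe_toNNReal _)
  simp only [transl_eq_sum, map_sum]
  exact continuous_finsetSum _ fun p _ =>
    (hlip (A p)).continuous.comp (continuous_const.add (continuous_id.smul continuous_const))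

def avg (e : E) (c : ℝ) (ω : (E →₀ W) →ₗ[ℝ] ℝ)
    (hω : ∀ A, Continuous fun t : ℝ => ω (transl (t • e) A)) : (E →₀ W) →ₗ[ℝ] ℝ where
  toFun A := c⁻¹ * ∫ t in 0..c, ω (transl (t • e) A)
  map_add' A B := by
    simp only [transl_add, map_add]
    rw [intervalIntegral.integral_add ((hω A).intervalIntegrable _ _)
      ((hω B).intervalIntegrable _ _), mul_add]
  map_smul' s A := by
    simp only [transl_smul, map_smul, smul_eq_mul, RingHom.id_apply,
      intervalIntegral.integral_const_mul]
    ring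

variable {e : E} {c : ℝ} {hω : ∀ A, Continuous fun t : ℝ => ω (transl (t • e) A)}

lemma avg_apply (A : E →₀ W) : avg e c ω hω A = c⁻¹ * ∫ t in 0..c, ω (transl (t • e) A) := rfl

lemma abs_avg_le {A : E →₀ W} {B : ℝ} (hB : ∀ t : ℝ, |ω (transl (t • e) A)| ≤ B) :
    |avg e c ω hω A| ≤ B := by
  have hB₀ : 0 ≤ B := (abs_nonneg _).trans (hB 0)
  have hI := intervalIntegral.norm_integral_le_of_norm_le_const (a := 0) (b := c)
    fun t _ => (Real.norm_eq_abs _).trans_le (hB t)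
  rw [Real.norm_eq_abs, sub_zero] at hI
  rw [avg_apply, abs_mul, abs_inv]
  rcases eq_or_ne c 0 with rfl | hc
  · simpa using hB₀
  · calc |c|⁻¹ * |∫ t in 0..c, ω (transl (t • e) A)| ≤ |c|⁻¹ * (B * |c|) := by gcongr
      _ = B := by field_simp

lemma IsFormBound.avg (hωr : IsFormBound r ω M) : IsFormBound r (avg e c ω hω) M :=
  fun σ p α hσ => abs_avg_le fun t => by
    rw [transl_diff_single]
    exact hωr σ _ α hσ

lemma abs_avg_del_smul_le (hc : 0 < c) {A : E →₀ W} {B : ℝ}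
    (hB : ∀ t : ℝ, |ω (transl (t • e) A)| ≤ B) (s : ℝ) :
    |avg e c ω hω (del (s • e) A)| ≤ 2 * |s| / c * B := by
  have htransl : ∀ t : ℝ, transl (t • e) (transl (s • e) A) = transl ((t + s) • e) A := fun t => by
    rw [transl_transl, add_smul, add_comm]
  rw [del, map_sub, avg_apply, avg_apply, ← mul_sub, abs_mul, abs_inv, abs_of_pos hc]
  simp only [htransl]
  calc c⁻¹ * |(∫ t in 0..c, ω (transl ((t + s) • e) A)) - ∫ t in 0..c, ω (transl (t • e) A)|
      ≤ c⁻¹ * (2 * |s| * B) := by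
        gcongr
        exact abs_integral_comp_add_right_sub_le (f := fun t => ω (transl (t • e) A)) (hω A) hB
          0 c s
    _ = 2 * |s| / c * B := by ring

lemma abs_avg_single_sub_le (hc : 0 < c) (hM : 0 ≤ M) (hω₁ : IsFormBound 1 ω M) (p : E) (α : W) :
    |avg e c ω hω (single p α) - ω (single p α)| ≤ M * ‖α‖ * (c * ‖e‖) := by
  have h := abs_inv_mul_integral_sub_le (f := fun t => ω (transl (t • e) (single p α))) (hω _) hc
    (L := M * ‖α‖ * (c * ‖e‖)) fun t ht => by
      simp only [zero_smul, transl_single, add_zero]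
      refine (abs_apply_single_sub_le hω₁ _ _ α).trans ?_
      rw [dist_self_add_left, norm_smul, Real.norm_of_nonneg ht.1.le]
      gcongr
      exact ht.2
  simpa [avg_apply, transl_zero] using h

end Average

section Mollify

variable {r : ℕ} {M c : ℝ}

def avgForm (c : ℝ) (e : E) (ω : {ω : (E →₀ W) →ₗ[ℝ] ℝ // IsFormBound (r + 1) ω M}) :
    {ω : (E →₀ W) →ₗ[ℝ] ℝ // IsFormBound (r + 1) ω M} :=
  ⟨avg e c ω.1 (continuous_apply_transl_smul (ω.2.mono r.succ_pos) e), ω.2.avg⟩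

def mollify (c : ℝ) (l : List E) (ω : {ω : (E →₀ W) →ₗ[ℝ] ℝ // IsFormBound (r + 1) ω M}) :
    {ω : (E →₀ W) →ₗ[ℝ] ℝ // IsFormBound (r + 1) ω M} :=
  l.foldr (avgForm c) ω

variable (ω : {ω : (E →₀ W) →ₗ[ℝ] ℝ // IsFormBound (r + 1) ω M})

lemma coe_avgForm (e : E) :
    (avgForm c e ω).1 = avg e c ω.1 (continuous_apply_transl_smul (ω.2.mono r.succ_pos) e) :=
  rfl

lemma mollify_cons (e : E) (l : List E) :
    mollify c (e :: l) ω = avgForm c e (mollify c l ω) := rfl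

lemma abs_mollify_diff_cons_smul_le (hc : 0 < c) {l : List E} {e : E} (he : e ∈ l) (s : ℝ)
    {σ : List E} (hσ : σ.length ≤ r + 1) (p : E) (α : W) :
    |(mollify c l ω).1 (diff (s • e :: σ) (single p α))| ≤ 2 * |s| / c * (M * lnorm σ * ‖α‖) := by
  induction l generalizing p with
  | nil => simp at he
  | cons e' l ih =>
    rw [mollify_cons, coe_avgForm]
    obtain rfl | he := List.mem_cons.mp he
    · refine abs_avg_del_smul_le hc (fun t => ?_) s
      rw [transl_diff_single]
      exact (mollify c l ω).2 σ _ α hσ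
    · refine abs_avg_le fun t => ?_
      rw [transl_diff_single]
      exact ih he _

lemma abs_mollify_single_sub_le (hc : 0 < c) (hM : 0 ≤ M) (l : List E) (p : E) (α : W) :
    |(mollify c l ω).1 (single p α) - ω.1 (single p α)| ≤ M * ‖α‖ * (c * (l.map norm).sum) := by
  induction l with
  | nil => simp [mollify]
  | cons e l ih =>
    have hstep := abs_avg_single_sub_le (e := e)
      (hω := continuous_apply_transl_smul ((mollify c l ω).2.mono r.succ_pos) e) hc hM
      ((mollify c l ω).2.mono r.succ_pos) p α
    calc _ ≤ |(mollify c (e :: l) ω).1 (single p α) - (mollify c l ω).1 (single p α)|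
          + |(mollify c l ω).1 (single p α) - ω.1 (single p α)| := abs_sub_le _ _ _
      _ ≤ M * ‖α‖ * (c * ‖e‖) + M * ‖α‖ * (c * (l.map norm).sum) := add_le_add hstep ih
      _ = M * ‖α‖ * (c * ((e :: l).map norm).sum) := by
        rw [List.map_cons, List.sum_cons]
        ring

lemma abs_mollify_sub_le (hc : 0 < c) (hM : 0 ≤ M) (l : List E) (A : E →₀ W) :
    |(mollify c l ω).1 A - ω.1 A| ≤ M * (c * (l.map norm).sum) * ∑ p ∈ A.support, ‖A p‖ := by
  rw [← LinearMap.sub_apply, apply_eq_sum_single, Finset.mul_sum]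
  refine (Finset.abs_sum_le_sum_abs _ _).trans (Finset.sum_le_sum fun p _ => ?_)
  rw [LinearMap.sub_apply, mul_right_comm]
  exact abs_mollify_single_sub_le ω hc hM l p (A p)

lemma abs_mollify_diff_cons_sum_smul_le (hc : 0 < c) {l : List E} {ι : Type*} (s : Finset ι)
    {a : ι → ℝ} {e : ι → E} (he : ∀ i ∈ s, e i ∈ l) {σ : List E} (hσ : σ.length ≤ r + 1)
    (p : E) (α : W) :
    |(mollify c l ω).1 (diff ((∑ i ∈ s, a i • e i) :: σ) (single p α))|
      ≤ 2 * (∑ i ∈ s, |a i|) / c * (M * lnorm σ * ‖α‖) := by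
  classical
  induction s using Finset.induction_on generalizing p with
  | empty => simp [diff, del_zero]
  | insert i s hi ih =>
    rw [Finset.sum_insert hi, Finset.sum_insert hi, diff, del_add, map_add, mul_add, add_div,
      add_mul, transl_diff_single]
    refine (abs_add_le _ _).trans (add_le_add ?_ (ih (fun j hj => he j (by simp [hj])) p))
    exact abs_mollify_diff_cons_smul_le ω hc (he i (by simp)) (a i) hσ _ α

end Mollify

section Euclidean

variable {n r : ℕ} {M : ℝ}

lemma sum_abs_apply_le (u : EuclideanSpace ℝ (Fin n)) : ∑ i, |u i| ≤ n * ‖u‖ := by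
  simpa using Finset.sum_le_card_nsmul Finset.univ (fun i => |u i|) ‖u‖
    fun i _ => PiLp.norm_apply_le u i

lemma exists_mollified_form (hM : 0 ≤ M) {ω : (EuclideanSpace ℝ (Fin n) →₀ W) →ₗ[ℝ] ℝ}
    (hω : IsFormBound (r + 1) ω M) (A : EuclideanSpace ℝ (Fin n) →₀ W) {ε : ℝ} (hε : 0 < ε) :
    ∃ η, IsFormBound (r + 1) η M ∧ IsClassB (r + 2) η ∧ |η A - ω A| ≤ ε := by
  set mass := ∑ p ∈ A.support, ‖A p‖
  have hmass : 0 ≤ mass := Finset.sum_nonneg fun p _ => norm_nonneg _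
  set c := ε / (M * n * mass + 1)
  have hc : 0 < c := by positivity
  set b := EuclideanSpace.basisFun (Fin n) ℝ
  set l := List.ofFn b
  let η := mollify c l ⟨ω, hω⟩
  refine ⟨η.1, η.2, ⟨_, le_max_of_le_left hM,
    isFormBound_succ (K := 2 * n / c * M) (η.2.mono (Nat.zero_le _)) fun u σ p α hσ => ?_⟩, ?_⟩
  · have h := abs_mollify_diff_cons_sum_smul_le ⟨ω, hω⟩ hc Finset.univ (l := l) (a := b.repr u)
      (e := b) (fun i _ => List.mem_ofFn.mpr ⟨i, rfl⟩) hσ p α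
    rw [b.sum_repr] at h
    refine h.trans ?_
    simp only [b, EuclideanSpace.basisFun_repr]
    calc (2 * ∑ i, |u i|) / c * (M * lnorm σ * ‖α‖)
        ≤ 2 * (n * ‖u‖) / c * (M * lnorm σ * ‖α‖) := by
          gcongr
          · exact mul_nonneg (mul_nonneg hM (lnorm_nonneg σ)) (norm_nonneg α)
          · exact sum_abs_apply_le u
      _ = 2 * n / c * M * ‖u‖ * lnorm σ * ‖α‖ := by ring
  · refine (abs_mollify_sub_le _ hc hM l A).trans ?_
    have hl : (l.map norm).sum = n := by simp [l, b, Function.comp_def]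
    rw [hl]
    calc M * (c * n) * mass = c * (M * n * mass) := by ring
      _ ≤ c * (M * n * mass + 1) := by gcongr; linarith
      _ = ε := div_mul_cancel₀ ε (by positivity)

lemma exists_smooth_approx (hM : 0 ≤ M) {ω : (EuclideanSpace ℝ (Fin n) →₀ W) →ₗ[ℝ] ℝ}
    (hω : IsFormBound r ω M) (A : EuclideanSpace ℝ (Fin n) →₀ W) {ε : ℝ} (hε : 0 < ε) :
    ∃ η, IsFormBound r η M ∧ IsClassB (r + 1) η ∧ |η A - ω A| ≤ ε := by
  cases r with
  | zero =>
    obtain ⟨η, hη, hηsmooth, hηA⟩ := exists_spike_form hM hω A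
    exact ⟨η, hη, hηsmooth, by rw [hηA, sub_self, abs_zero]; exact hε.le⟩
  | succ r => exact exists_mollified_form hM hω A hε

end Euclidean

section Completion

variable {X : Type*} [SeminormedAddCommGroup X] [NormedSpace ℝ X] {r : ℕ}
  {ι : (E →₀ W) →ₗ[ℝ] X}

lemma isFormBound_comp (hiso : ∀ A, ‖ι A‖ = Bnorm r A) (g : X →L[ℝ] ℝ) :
    IsFormBound r ((g : X →ₗ[ℝ] ℝ) ∘ₗ ι) ‖g‖ := by
  intro σ p α hσ
  calc |g (ι (diff σ (single p α)))| ≤ ‖g‖ * ‖ι (diff σ (single p α))‖ := g.le_opNorm _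
    _ ≤ ‖g‖ * (lnorm σ * ‖α‖) := by
      rw [hiso]
      gcongr
      exact Bnorm_diff_single_le hσ p α
    _ = ‖g‖ * lnorm σ * ‖α‖ := (mul_assoc _ _ _).symm

lemma abs_le_formNorm_mul_norm (hiso : ∀ A, ‖ι A‖ = Bnorm r A) (hdense : DenseRange ι)
    {g : X →L[ℝ] ℝ} (hg : IsClassB r ((g : X →ₗ[ℝ] ℝ) ∘ₗ ι)) (x : X) :
    |g x| ≤ formNorm r ((g : X →ₗ[ℝ] ℝ) ∘ₗ ι) * ‖x‖ := by
  refine hdense.induction_on x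
    (isClosed_le (continuous_abs.comp g.continuous) (continuous_const.mul continuous_norm))
    fun A => ?_
  rw [hiso]
  exact abs_le_mul_Bnorm (formNorm_nonneg r _) (isFormBound_formNorm hg) A

variable (ι) in
lemma exists_comp_eq_of_abs_le {η : (E →₀ W) →ₗ[ℝ] ℝ} {K : ℝ} (hK : 0 ≤ K)
    (hη : ∀ A, |η A| ≤ K * ‖ι A‖) :
    ∃ g : X →L[ℝ] ℝ, ‖g‖ ≤ K ∧ (g : X →ₗ[ℝ] ℝ) ∘ₗ ι = η := by
  have hker : LinearMap.ker ι ≤ LinearMap.ker η := fun A hA => by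
    have := hη A
    rw [LinearMap.mem_ker.mp hA, norm_zero, mul_zero] at this
    exact abs_nonpos_iff.mp this
  let f : LinearMap.range ι →ₗ[ℝ] ℝ :=
    (LinearMap.ker ι).liftQ η hker ∘ₗ (ι.quotKerEquivRange.symm : _ →ₗ[ℝ] _)
  have hf : ∀ A, f ⟨ι A, LinearMap.mem_range_self ι A⟩ = η A := fun A => by
    have : ι.quotKerEquivRange.symm ⟨ι A, LinearMap.mem_range_self ι A⟩ =
        Submodule.Quotient.mk A := by
      rw [LinearEquiv.symm_apply_eq]
      rfl
    simp [f, this]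
  have hfK : ∀ y, ‖f y‖ ≤ K * ‖y‖ := by
    rintro ⟨_, A, rfl⟩
    rw [Real.norm_eq_abs, hf A]
    exact hη A
  obtain ⟨g, hgf, hg⟩ := exists_extension_norm_eq _ (f.mkContinuous K hfK)
  refine ⟨g, hg ▸ LinearMap.mkContinuous_norm_le f hK hfK, LinearMap.ext fun A => ?_⟩
  exact (hgf ⟨ι A, LinearMap.mem_range_self ι A⟩).trans (hf A)

end Completion

section EuclideanCompletion

variable {X : Type*} [SeminormedAddCommGroup X] [NormedSpace ℝ X] {n r : ℕ}
  {ι : (EuclideanSpace ℝ (Fin n) →₀ W) →ₗ[ℝ] X}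

lemma exists_smooth_functional_norm_sub_le (hiso : ∀ A, ‖ι A‖ = Bnorm r A)
    (hdense : DenseRange ι) (J : X) {ε : ℝ} (hε : 0 < ε) :
    ∃ g : X →L[ℝ] ℝ, ‖g‖ ≤ 1 ∧ IsClassB (r + 1) ((g : X →ₗ[ℝ] ℝ) ∘ₗ ι) ∧ ‖J‖ - ε ≤ g J := by
  obtain ⟨g₀, hg₀, hg₀J⟩ := exists_dual_vector'' ℝ J
  obtain ⟨A, hA⟩ := hdense.exists_dist_lt J (div_pos hε three_pos)
  obtain ⟨η, hη, hηsmooth, hηA⟩ :=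
    exists_smooth_approx (norm_nonneg g₀) (isFormBound_comp hiso g₀) A (div_pos hε three_pos)
  obtain ⟨g, hg, rfl⟩ := exists_comp_eq_of_abs_le ι (norm_nonneg g₀)
    fun B => hiso B ▸ abs_le_mul_Bnorm (norm_nonneg g₀) hη B
  have hg₁ : ‖g‖ ≤ 1 := hg.trans hg₀
  refine ⟨g, hg₁, hηsmooth, ?_⟩
  have hgA : |g J - g (ι A)| ≤ dist J (ι A) :=
    (g.dist_le_opNorm J (ι A)).trans (mul_le_of_le_one_left dist_nonneg hg₁)
  have hg₀A : |g₀ J - g₀ (ι A)| ≤ dist J (ι A) :=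
    (g₀.dist_le_opNorm J (ι A)).trans (mul_le_of_le_one_left dist_nonneg hg₀)
  simp only [LinearMap.comp_apply, ContinuousLinearMap.coe_coe] at hηA
  rw [hg₀J, RCLike.ofReal_real_eq_id, id] at hg₀A
  linarith [abs_le.mp hgA, abs_le.mp hg₀A, abs_le.mp hηA]

lemma exists_smooth_functional_norm_sub_le_div (hiso : ∀ A, ‖ι A‖ = Bnorm r A)
    (hdense : DenseRange ι) {J : X} {ε : ℝ} (hε : 0 < ε) (hεJ : ε < ‖J‖) :
    ∃ g : X →L[ℝ] ℝ, g ≠ 0 ∧ IsClassB (r + 1) ((g : X →ₗ[ℝ] ℝ) ∘ₗ ι) ∧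
      ‖J‖ - ε ≤ |g J| / formNorm r ((g : X →ₗ[ℝ] ℝ) ∘ₗ ι) := by
  obtain ⟨g, hg₁, hg, hgJ⟩ := exists_smooth_functional_norm_sub_le hiso hdense J hε
  have hgJ₀ : 0 < |g J| := (sub_pos.mpr hεJ).trans_le (hgJ.trans (le_abs_self _))
  have hF₁ : formNorm r ((g : X →ₗ[ℝ] ℝ) ∘ₗ ι) ≤ 1 :=
    (formNorm_le (norm_nonneg g) (isFormBound_comp hiso g)).trans hg₁
  have hF₀ : 0 < formNorm r ((g : X →ₗ[ℝ] ℝ) ∘ₗ ι) := by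
    have := hgJ₀.trans_le (abs_le_formNorm_mul_norm hiso hdense (hg.mono r.le_succ) J)
    exact pos_of_mul_pos_left this (norm_nonneg J)
  refine ⟨g, fun h => by simp [h] at hgJ₀, hg, ?_⟩
  exact hgJ.trans ((le_abs_self _).trans (le_div_self (abs_nonneg _) hF₀ hF₁))

end EuclideanCompletion

/-- `X` models the completion `B̂_k^r`: any seminormed space containing the Dirac chains
isometrically (for the `B^r` norm) as a dense subspace. -/
theorem norm_eq_sup_over_smoother_forms {n : ℕ} {W : Type*}
    [NormedAddCommGroup W] [NormedSpace ℝ W] (r : ℕ)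
    (X : Type*) [SeminormedAddCommGroup X] [NormedSpace ℝ X]
    (ι : ((EuclideanSpace ℝ (Fin n)) →₀ W) →ₗ[ℝ] X)
    (hiso : ∀ A, ‖ι A‖ = Bnorm r A) (hdense : DenseRange ι)
    (J : X) :
    ‖J‖ = sSup {x : ℝ | ∃ g : X →L[ℝ] ℝ, g ≠ 0 ∧
      (∃ M, 0 ≤ M ∧ IsFormBound (r + 1) ((g : X →ₗ[ℝ] ℝ) ∘ₗ ι) M) ∧
      x = |g J| / formNorm r ((g : X →ₗ[ℝ] ℝ) ∘ₗ ι)} := by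
  set S := {x : ℝ | ∃ g : X →L[ℝ] ℝ, g ≠ 0 ∧
      (∃ M, 0 ≤ M ∧ IsFormBound (r + 1) ((g : X →ₗ[ℝ] ℝ) ∘ₗ ι) M) ∧
      x = |g J| / formNorm r ((g : X →ₗ[ℝ] ℝ) ∘ₗ ι)}
  have hS_le : ∀ x ∈ S, x ≤ ‖J‖ := by
    rintro _ ⟨g, -, hg, rfl⟩
    refine div_le_of_le_mul₀ (formNorm_nonneg r _) (norm_nonneg J) ?_
    rw [mul_comm]
    exact abs_le_formNorm_mul_norm hiso hdense (IsClassB.mono hg r.le_succ) J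
  have hS_nonneg : 0 ≤ sSup S := Real.sSup_nonneg fun _ ⟨_, _, _, hx⟩ =>
    hx ▸ div_nonneg (abs_nonneg _) (formNorm_nonneg r _)
  refine le_antisymm (le_of_forall_pos_le_add fun ε hε => ?_) (Real.sSup_le hS_le (norm_nonneg J))
  rcases le_or_gt ‖J‖ ε with hJ | hJ
  · linarith
  · obtain ⟨g, hg₀, hg, hgJ⟩ := exists_smooth_functional_norm_sub_le_div hiso hdense hε hJ
    linarith [le_csSup ⟨‖J‖, hS_le⟩ ⟨g, hg₀, hg, rfl⟩]
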